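/- arXiv:1009.3985 — 2 statements merged into one kernel-verified Lean document; each statement's English description precedes it below -/
import Mathlib

section
/- Let n be an even natural number. Then n belongs to B if and only if n/2 is a perfect square. -/
open PowerSeries

/-- `g = ∑_{n ≥ 0} x^{n²}` in `(ℤ/2ℤ)[[x]]`: the coefficient of `x^m` is `1`
exactly when `m` is a perfect square. -/
noncomputable def g : PowerSeries (ZMod 2) :=
  PowerSeries.mk fun m => if IsSquare m then 1 else 0

/-- `B` is the set of `n` for which the coefficient of `x^n` in `1/g` equals `1`. -/
noncomputable def B : Set ℕ := {n | PowerSeries.coeff (R := ZMod 2) n g⁻¹ = 1}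

/-!
Over `𝔽₂` squaring is the Frobenius `f(x) ↦ f(x²)`, so `(g⁻¹)²` has only even exponents, and
the even part of `g` is `g(x⁴) = g⁴` because the even squares are the numbers `4k²`. Writing
`g⁻¹ = g · (g⁻¹)²`, the even part of `g⁻¹` is therefore `g⁴ · (g⁻¹)² = g² = g(x²)`, whose
coefficient of `x^n` is `1` exactly when `n / 2` is a square.
-/

namespace PowerSeries

variable {R : Type*} [CommRing R]

theorem map_frobenius_expand (p : ℕ) (hp : p ≠ 0) [ExpChar R p] (f : R⟦X⟧) :
    map (frobenius R p) (expand p hp f) = f ^ p :=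
  MvPowerSeries.map_frobenius_expand p hp

theorem expand_zmod (p : ℕ) [Fact p.Prime] (f : (ZMod p)⟦X⟧) :
    expand p (NeZero.ne p) f = f ^ p := by
  rw [← map_frobenius_expand, ZMod.frobenius_zmod, map_id, id]

noncomputable def evenPart (f : R⟦X⟧) : R⟦X⟧ :=
  mk fun n => if Even n then coeff n f else 0

theorem coeff_evenPart (f : R⟦X⟧) (n : ℕ) :
    coeff n (evenPart f) = if Even n then coeff n f else 0 :=
  coeff_mk _ _

theorem evenPart_mul_expand_two (f q : R⟦X⟧) :
    evenPart (f * expand 2 two_ne_zero q) = evenPart f * expand 2 two_ne_zero q := by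
  ext n
  rw [coeff_evenPart, coeff_mul, coeff_mul, Finset.ite_sum_zero]
  refine Finset.sum_congr rfl fun ⟨i, j⟩ hij => ?_
  rw [Finset.HasAntidiagonal.mem_antidiagonal] at hij
  subst hij
  rw [coeff_evenPart, coeff_expand]
  by_cases hj : 2 ∣ j
  · simp only [even_iff_two_dvd, Nat.dvd_add_left hj, if_pos hj, ite_mul, zero_mul]
  · simp only [hj, if_false, mul_zero, ite_self]

end PowerSeries

theorem Nat.even_and_isSquare_iff (n : ℕ) : Even n ∧ IsSquare n ↔ 4 ∣ n ∧ IsSquare (n / 4) := by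
  constructor
  · rintro ⟨hn, r, rfl⟩
    obtain ⟨s, rfl⟩ : Even r := by simpa [Nat.even_mul] using hn
    refine ⟨⟨s * s, by ring⟩, s, ?_⟩
    rw [show (s + s) * (s + s) = 4 * (s * s) by ring, Nat.mul_div_cancel_left _ four_pos]
  · rintro ⟨⟨m, rfl⟩, s, hs⟩
    rw [Nat.mul_div_cancel_left _ four_pos] at hs
    exact ⟨⟨2 * m, by ring⟩, 2 * s, by rw [hs]; ring⟩

theorem coeff_g (n : ℕ) : coeff n g = if IsSquare n then 1 else 0 :=
  coeff_mk _ _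

theorem constantCoeff_g : constantCoeff g = 1 := by
  rw [← coeff_zero_eq_constantCoeff_apply, coeff_g, if_pos IsSquare.zero]

theorem g_mul_inv : g * g⁻¹ = 1 :=
  PowerSeries.mul_inv_cancel g (by rw [constantCoeff_g]; exact one_ne_zero)

theorem evenPart_g : evenPart g = g ^ 4 := by
  have hexpand : expand 4 four_ne_zero g = g ^ 4 := by
    rw [show g ^ 4 = (g ^ 2) ^ 2 by ring, ← expand_zmod, ← expand_zmod, ← expand_mul]
  ext n
  rw [← hexpand, coeff_evenPart, coeff_expand, coeff_g, coeff_g, ← ite_and, ← ite_and]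
  exact if_congr (Nat.even_and_isSquare_iff n) rfl rfl

theorem evenPart_inv_g : evenPart g⁻¹ = g ^ 2 := by
  have hinv : g⁻¹ = g * expand 2 two_ne_zero g⁻¹ := by
    rw [expand_zmod]
    linear_combination (-g⁻¹) * g_mul_inv
  rw [hinv, evenPart_mul_expand_two, evenPart_g, expand_zmod]
  linear_combination g ^ 2 * (g * g⁻¹ + 1) * g_mul_inv

theorem stmt0 (n : ℕ) (hn : Even n) :
    n ∈ B ↔ IsSquare (n / 2) := by
  have hcoeff : coeff n g⁻¹ = coeff (n / 2) g := by
    calc coeff n g⁻¹ = coeff n (evenPart g⁻¹) := by rw [coeff_evenPart, if_pos hn]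
      _ = coeff (n / 2) g := by
        rw [evenPart_inv_g, ← expand_zmod, coeff_expand, if_pos hn.two_dvd]
  change coeff n g⁻¹ = 1 ↔ _
  rw [hcoeff, coeff_g]
  split_ifs with h <;> simp [h]
end

section
/- Let n be a natural number with n ≡ 7 (mod 16). Then n belongs to B if and only if the number of triples (a,b,c) of nonnegative integers with n = a² + 2b² + 4c² is odd. -/
/-!
Over `𝔽₂` squaring is the Frobenius, so every power series is uniquely `A² + X B²`, and the
coefficient of `X^(2k+1)` in it is the coefficient of `X^k` in `B`.

Let `ψ = ∑_{c ∈ ℤ} X^(c(2c+1))` be the theta series of the triangular numbers;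
splitting by the parity of `c` gives `ψ = ψ_even² + X ψ_odd²` with
`ψ_even = ∑ X^(c(4c+1))` and `ψ_odd = ∑ X^(c(4c+3))`. Mod 2 one has `g = g⁴ + X ψ⁸`,
since a square is `(2b)²` or `8c(2c+1) + 1`, and `ψ_even ψ_odd = ψ⁵`, by a change of
variables in `ℤ²`. Hence `g⁻¹ + g^(2m+1) = (g + g^(m+2))² + X (ψ⁴ (g⁻¹ + g^m))²`, and three
odd-part extractions take the coefficient of `X^(16k+7)` in `g⁻¹ + g⁷` to that of `X^(2k)`
in `ψ⁷ (g⁻¹ + 1)`. The relations make `ψ (g⁻¹ + 1)` of the form `X W²`, so this coefficient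
vanishes. Finally `g⁷ = g · g² · g⁴ = ∑ X^(a² + 2b² + 4c²)`.
-/

open PowerSeries

open Function Finset

namespace PowerSeries

theorem sq_eq_expand_two (φ : (ZMod 2)⟦X⟧) : φ ^ 2 = expand 2 two_ne_zero φ := by
  rw [← MvPowerSeries.map_frobenius_expand 2 two_ne_zero, ZMod.frobenius_zmod,
    MvPowerSeries.map_id]
  rfl

theorem coeff_sq_of_not_two_dvd (φ : (ZMod 2)⟦X⟧) {m : ℕ} (hm : ¬ 2 ∣ m) :
    coeff m (φ ^ 2) = 0 := by
  rw [sq_eq_expand_two, coeff_expand_of_not_dvd _ _ _ hm]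

theorem coeff_two_mul_add_one_sq_add_X_mul_sq (φ ψ : (ZMod 2)⟦X⟧) (k : ℕ) :
    coeff (2 * k + 1) (φ ^ 2 + X * ψ ^ 2) = coeff k ψ := by
  rw [map_add, coeff_sq_of_not_two_dvd _ (by omega), coeff_succ_X_mul, sq_eq_expand_two,
    coeff_expand_mul, zero_add]

theorem coeff_two_mul_X_mul_sq (ψ : (ZMod 2)⟦X⟧) (k : ℕ) : coeff (2 * k) (X * ψ ^ 2) = 0 := by
  rcases k with _ | k
  · simp
  · rw [show 2 * (k + 1) = (2 * k + 1) + 1 by ring, coeff_succ_X_mul,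
      coeff_sq_of_not_two_dvd _ (by omega)]

end PowerSeries

namespace ThetaModTwo

section CharTwoIdentities

variable {R : Type*} [CommRing R] {x g h t u v : R}

theorem eq_of_sq_add_mul_eq_sq_add_mul [CharP R 2] [IsDomain R] {y z : R}
    (hyz : y ^ 2 + t * y = z ^ 2 + t * z) (hne : y + z + t ≠ 0) : y = z := by
  have hprod : (y + z) * (y + z + t) = 0 := by
    linear_combination (norm := (ring_nf; reduce_mod_char!)) hyz
  exact CharTwo.add_eq_zero.mp ((mul_eq_zero.mp hprod).resolve_right hne)

/-- Both sides are roots of `Y² + t Y = x t¹⁰`. -/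
theorem add_sq_mul_eq_mul_sq [CharP R 2] [IsDomain R] (hg : g = g ^ 4 + x * t ^ 8)
    (ht : t = u ^ 2 + x * v ^ 2) (huv : u * v = t ^ 5) (hne : (g + g ^ 2) * t + x * v ^ 2 + t ≠ 0) :
    (g + g ^ 2) * t = x * v ^ 2 :=
  eq_of_sq_add_mul_eq_sq_add_mul (by
    linear_combination (norm := (ring_nf; reduce_mod_char!))
      t ^ 2 * hg + x * v ^ 2 * ht + x * (u * v + t ^ 5) * huv) hne

theorem mul_one_add_eq_of_add_sq_mul_eq [IsDomain R] (hgh : g * h = 1) (huv : u * v = t ^ 5)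
    (ht0 : t ≠ 0) (hkey : (g + g ^ 2) * t = x * v ^ 2) :
    u * (1 + g) = x * v * t ^ 4 * h := by
  have hcancel : u * (g + g ^ 2) = x * v * t ^ 4 :=
    mul_right_cancel₀ ht0 (by linear_combination u * hkey + x * v * huv)
  linear_combination h * hcancel + (-u - u * g) * hgh

theorem inv_eq_sq_add_mul_sq [CharP R 2] (hgh : g * h = 1) (hg : g = g ^ 4 + x * t ^ 8) :
    h = g ^ 2 + x * (t ^ 4 * h) ^ 2 := by
  linear_combination (norm := (ring_nf; reduce_mod_char!))
    (-(h ^ 2)) * hg + (h - g ^ 2 - g ^ 3 * h) * hgh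

theorem sq_mul_inv_add_pow [CharP R 2] (hgh : g * h = 1) (hg : g = g ^ 4 + x * t ^ 8) (s : R)
    (m : ℕ) :
    s ^ 2 * (h + g ^ (2 * m + 1)) =
      (s * (g + g ^ (m + 2))) ^ 2 + x * (s * t ^ 4 * (h + g ^ m)) ^ 2 := by
  linear_combination (norm := (ring_nf; reduce_mod_char!))
    s ^ 2 * inv_eq_sq_add_mul_sq hgh hg + (s ^ 2 * g ^ (2 * m)) * hg

theorem mul_inv_add_one_eq [CharP R 2] (hgh : g * h = 1) (hg : g = g ^ 4 + x * t ^ 8)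
    (ht : t = u ^ 2 + x * v ^ 2) (hu : u * (1 + g) = x * v * t ^ 4 * h) :
    t * (h + 1) = x * (u * (t ^ 4 * h) + v * (1 + g)) ^ 2 := by
  -- `t (h + 1) = (u² + x v²)(A² + x B²)` with `A = 1 + g`, `B = t⁴ h`; this is
  -- `(u A + x v B)² + x (u B + v A)²`, and `u A + x v B = 0` by `hu`
  linear_combination (norm := (ring_nf; reduce_mod_char!))
    (h + 1) * ht + (u ^ 2 + x * v ^ 2) * inv_eq_sq_add_mul_sq hgh hg +
      (u * (1 + g) + x * v * t ^ 4 * h) * hu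

end CharTwoIdentities

instance : CharP (ZMod 2)⟦X⟧ 2 := charP_of_injective_algebraMap' (ZMod 2) 2

/-- `∑_c X^(e c)` over `𝔽₂`. -/
noncomputable def countSeries {ι : Type*} (e : ι → ℕ) : (ZMod 2)⟦X⟧ :=
  mk fun m => (Nat.card {c // e c = m} : ZMod 2)

section CountSeries

variable {ι κ : Type*}

@[simp]
theorem coeff_countSeries (e : ι → ℕ) (m : ℕ) :
    coeff m (countSeries e) = (Nat.card {c // e c = m} : ZMod 2) :=
  coeff_mk _ _

theorem subsingleton_fiber_of_injective {e : ι → ℕ} (he : Injective e) (m : ℕ) :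
    Subsingleton {c // e c = m} :=
  ⟨fun a b => Subtype.ext (he (a.2.trans b.2.symm))⟩

theorem finite_fiber_of_injective {e : ι → ℕ} (he : Injective e) (m : ℕ) :
    Finite {c // e c = m} :=
  @Finite.of_subsingleton _ (subsingleton_fiber_of_injective he m)

theorem card_fiber_apply_of_injective {e : ι → ℕ} (he : Injective e) (c : ι) :
    Nat.card {c' // e c' = e c} = 1 :=
  @Nat.card_unique _ ⟨⟨c, rfl⟩⟩ (subsingleton_fiber_of_injective he _)

theorem countSeries_congr {e : ι → ℕ} {e' : κ → ℕ} (σ : ι ≃ κ) (h : ∀ c, e' (σ c) = e c) :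
    countSeries e = countSeries e' := by
  ext m
  simp only [coeff_countSeries]
  exact congrArg _ (Nat.card_congr (σ.subtypeEquiv fun c => by rw [h]))

theorem countSeries_sumElim {e₁ : ι → ℕ} {e₂ : κ → ℕ} (h₁ : ∀ m, Finite {c // e₁ c = m})
    (h₂ : ∀ m, Finite {c // e₂ c = m}) :
    countSeries (Sum.elim e₁ e₂) = countSeries e₁ + countSeries e₂ := by
  ext m
  have hcard : Nat.card {c // Sum.elim e₁ e₂ c = m} =
      Nat.card {c // e₁ c = m} + Nat.card {c // e₂ c = m} :=
    (Nat.card_congr Equiv.subtypeSum).trans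
      (Nat.card_sum (α := {c // e₁ c = m}) (β := {c // e₂ c = m}))
  simp only [coeff_countSeries, map_add, hcard, Nat.cast_add]

theorem X_mul_countSeries (e : ι → ℕ) : X * countSeries e = countSeries (e · + 1) := by
  ext m
  rcases m with _ | m
  · simp
  · rw [coeff_succ_X_mul, coeff_countSeries, coeff_countSeries]
    exact congrArg _ (Nat.card_congr (Equiv.subtypeEquivRight fun c => by omega))

theorem countSeries_sq (e : ι → ℕ) : countSeries e ^ 2 = countSeries (2 * e ·) := by
  ext m
  rw [sq_eq_expand_two, coeff_expand, coeff_countSeries]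
  split_ifs with hm
  · obtain ⟨k, rfl⟩ := hm
    rw [Nat.mul_div_cancel_left _ two_pos, coeff_countSeries]
    exact congrArg _ (Nat.card_congr (Equiv.subtypeEquivRight fun c => by omega))
  · have : IsEmpty {c // 2 * e c = m} := ⟨fun c => hm ⟨_, c.2.symm⟩⟩
    simp

def fiberAddEquiv (e₁ : ι → ℕ) (e₂ : κ → ℕ) (N : ℕ) :
    {q : ι × κ // e₁ q.1 + e₂ q.2 = N} ≃
      Σ p : antidiagonal N, {c // e₁ c = p.1.1} × {d // e₂ d = p.1.2} where
  toFun q := ⟨⟨(e₁ q.1.1, e₂ q.1.2), HasAntidiagonal.mem_antidiagonal.mpr q.2⟩,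
    ⟨q.1.1, rfl⟩, ⟨q.1.2, rfl⟩⟩
  invFun s := ⟨(s.2.1.1, s.2.2.1), by
    rw [s.2.1.2, s.2.2.2]
    exact HasAntidiagonal.mem_antidiagonal.mp s.1.2⟩
  left_inv _ := rfl
  right_inv := by
    rintro ⟨⟨⟨i, j⟩, hij⟩, ⟨c, hc : e₁ c = i⟩, ⟨d, hd : e₂ d = j⟩⟩
    subst hc hd
    rfl

theorem finite_fiber_add {e₁ : ι → ℕ} {e₂ : κ → ℕ} (h₁ : ∀ m, Finite {c // e₁ c = m})
    (h₂ : ∀ m, Finite {c // e₂ c = m}) (N : ℕ) :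
    Finite {q : ι × κ // e₁ q.1 + e₂ q.2 = N} :=
  Finite.of_equiv _ (fiberAddEquiv e₁ e₂ N).symm

theorem countSeries_mul {e₁ : ι → ℕ} {e₂ : κ → ℕ} (h₁ : ∀ m, Finite {c // e₁ c = m})
    (h₂ : ∀ m, Finite {c // e₂ c = m}) :
    countSeries e₁ * countSeries e₂ = countSeries fun q : ι × κ => e₁ q.1 + e₂ q.2 := by
  ext N
  rw [coeff_mul, coeff_countSeries, Nat.card_congr (fiberAddEquiv e₁ e₂ N), Nat.card_sigma,
    ← Finset.sum_coe_sort, Nat.cast_sum]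
  refine Finset.sum_congr rfl fun p _ => ?_
  rw [coeff_countSeries, coeff_countSeries, Nat.card_prod, Nat.cast_mul]

end CountSeries

theorem sq_injective : Injective fun a : ℕ => a ^ 2 := Nat.pow_left_injective two_ne_zero

theorem two_mul_injective : Injective fun n : ℕ => 2 * n := mul_right_injective₀ two_ne_zero

/-- `toNat` loses nothing when `0 < b < a`, as then `c (a c + b) ≥ 0`. -/
def quadExp (a b c : ℤ) : ℕ := (c * (a * c + b)).toNat

theorem natCast_quadExp {a b : ℤ} (hb : 0 < b) (hba : b < a) (c : ℤ) :
    (quadExp a b c : ℤ) = c * (a * c + b) := by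
  refine Int.toNat_of_nonneg ?_
  rcases le_or_gt 0 c with hc | hc
  · exact mul_nonneg hc (by nlinarith)
  · exact mul_nonneg_of_nonpos_of_nonpos hc.le (by nlinarith)

theorem quadExp_injective {a b : ℤ} (hb : 0 < b) (hba : b < a) : Injective (quadExp a b) := by
  intro c d hcd
  have h := congrArg (fun n : ℕ => (n : ℤ)) hcd
  simp only [natCast_quadExp hb hba] at h
  have hprod : (c - d) * (a * (c + d) + b) = 0 := by linear_combination h
  rcases mul_eq_zero.mp hprod with h' | h'
  · linarith
  · rcases le_or_gt 0 (c + d) with hs | hs <;> nlinarith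

noncomputable def psi : (ZMod 2)⟦X⟧ := countSeries (quadExp 2 1)

noncomputable def psiEven : (ZMod 2)⟦X⟧ := countSeries (quadExp 4 1)

noncomputable def psiOdd : (ZMod 2)⟦X⟧ := countSeries (quadExp 4 3)

theorem g_eq_countSeries : g = countSeries fun a : ℕ => a ^ 2 := by
  ext m
  rw [g, coeff_mk, coeff_countSeries]
  split_ifs with hm
  · obtain ⟨r, rfl⟩ := hm
    rw [← sq, card_fiber_apply_of_injective sq_injective, Nat.cast_one]
  · have : IsEmpty {a : ℕ // a ^ 2 = m} := ⟨fun ⟨a, ha⟩ => hm ⟨a, by rw [← ha, sq]⟩⟩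
    simp

theorem constantCoeff_g : constantCoeff g = 1 := by
  simp [g, ← coeff_zero_eq_constantCoeff_apply]

theorem constantCoeff_psi : constantCoeff psi = 1 := by
  rw [← coeff_zero_eq_constantCoeff_apply, psi, coeff_countSeries,
    show 0 = quadExp 2 1 0 from rfl,
    card_fiber_apply_of_injective (quadExp_injective one_pos one_lt_two), Nat.cast_one]

/-- `n = 2 b` or `n = |4 c + 1|`, so that `n² = 4 b²` or `n² = 8 c (2 c + 1) + 1`. -/
def squareEquiv : ℕ ⊕ ℤ ≃ ℕ where
  toFun := Sum.elim (2 * ·) (fun c => (4 * c + 1).natAbs)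
  invFun n := if n % 2 = 0 then .inl (n / 2)
    else .inr (if n % 4 = 1 then ((n / 4 : ℕ) : ℤ) else -((n / 4 : ℕ) : ℤ) - 1)
  left_inv := by
    rintro (b | c)
    · simp
    · have h1 : ¬ (4 * c + 1).natAbs % 2 = 0 := by omega
      simp only [Sum.elim_inr, h1, if_false, Sum.inr.injEq]
      split_ifs <;> omega
  right_inv := by
    intro n
    dsimp only
    split_ifs <;> simp <;> omega

theorem g_eq : g = g ^ 4 + X * psi ^ 8 := by
  have h₁ : Injective fun b : ℕ => 2 * (2 * b ^ 2) :=
    two_mul_injective.comp (two_mul_injective.comp sq_injective)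
  have h₂ : Injective fun c : ℤ => 2 * (2 * (2 * quadExp 2 1 c)) + 1 :=
    (add_left_injective 1).comp (two_mul_injective.comp (two_mul_injective.comp
      (two_mul_injective.comp (quadExp_injective one_pos one_lt_two))))
  rw [show g ^ 4 = (g ^ 2) ^ 2 by ring, show psi ^ 8 = ((psi ^ 2) ^ 2) ^ 2 by ring,
    g_eq_countSeries, psi, countSeries_sq, countSeries_sq, countSeries_sq, countSeries_sq,
    countSeries_sq, X_mul_countSeries,
    ← countSeries_sumElim (finite_fiber_of_injective h₁) (finite_fiber_of_injective h₂)]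
  refine (countSeries_congr squareEquiv fun s => ?_).symm
  rcases s with b | c
  · simp only [squareEquiv, Equiv.coe_fn_mk, Sum.elim_inl]
    ring
  · simp only [squareEquiv, Equiv.coe_fn_mk, Sum.elim_inr]
    zify
    push_cast [natCast_quadExp, Int.natCast_natAbs, sq_abs]
    ring

def parityEquiv : ℤ ⊕ ℤ ≃ ℤ where
  toFun := Sum.elim (2 * ·) (fun d => -(2 * d + 1))
  invFun c := if c % 2 = 0 then .inl (c / 2) else .inr ((-c - 1) / 2)
  left_inv := by
    rintro (d | d) <;> simp
  right_inv := by
    intro c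
    dsimp only
    split_ifs <;> simp only [Sum.elim_inl, Sum.elim_inr] <;> omega

theorem psi_eq : psi = psiEven ^ 2 + X * psiOdd ^ 2 := by
  have h₁ : Injective fun c : ℤ => 2 * quadExp 4 1 c :=
    two_mul_injective.comp (quadExp_injective (by norm_num) (by norm_num))
  have h₂ : Injective fun c : ℤ => 2 * quadExp 4 3 c + 1 :=
    (add_left_injective 1).comp
      (two_mul_injective.comp (quadExp_injective (by norm_num) (by norm_num)))
  rw [psi, psiEven, psiOdd, countSeries_sq, countSeries_sq, X_mul_countSeries,
    ← countSeries_sumElim (finite_fiber_of_injective h₁) (finite_fiber_of_injective h₂)]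
  refine (countSeries_congr parityEquiv fun s => ?_).symm
  rcases s with d | d
  all_goals
    simp only [parityEquiv, Equiv.coe_fn_mk, Sum.elim_inl, Sum.elim_inr]
    zify
    push_cast [natCast_quadExp]
    ring

/-- With `c = m - j` and `j + m = 2 d` or `-(2 d + 1)`,
`2 c² + c + 8 d² + 4 d = 4 j² + j + 4 m² + 3 m`. -/
def quadFormEquiv : ℤ × ℤ ≃ ℤ × ℤ where
  toFun q := (q.2 - q.1, if (q.1 + q.2) % 2 = 0 then (q.1 + q.2) / 2 else -(q.1 + q.2 + 1) / 2)
  invFun p := if p.1 % 2 = 0 then (p.2 - p.1 / 2, p.2 + p.1 / 2)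
    else (-p.2 - p.1 / 2 - 1, p.1 / 2 - p.2)
  left_inv := by
    rintro ⟨j, m⟩
    dsimp only
    split_ifs <;> ext <;> dsimp only <;> omega
  right_inv := by
    rintro ⟨c, d⟩
    dsimp only
    split_ifs <;> ext <;> dsimp only <;> omega

theorem psiEven_mul_psiOdd : psiEven * psiOdd = psi ^ 5 := by
  have h₄ : Injective fun c : ℤ => 2 * (2 * quadExp 2 1 c) :=
    two_mul_injective.comp (two_mul_injective.comp (quadExp_injective one_pos one_lt_two))
  rw [show psi ^ 5 = psi * (psi ^ 2) ^ 2 by ring, psiEven, psiOdd, psi, countSeries_sq,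
    countSeries_sq,
    countSeries_mul (finite_fiber_of_injective (quadExp_injective (by norm_num) (by norm_num)))
      (finite_fiber_of_injective (quadExp_injective (by norm_num) (by norm_num))),
    countSeries_mul (finite_fiber_of_injective (quadExp_injective one_pos one_lt_two))
      (finite_fiber_of_injective h₄)]
  refine countSeries_congr quadFormEquiv fun ⟨j, m⟩ => ?_
  zify
  push_cast [natCast_quadExp]
  simp only [quadFormEquiv, Equiv.coe_fn_mk]
  split_ifs
  · have hd : j + m = 2 * ((j + m) / 2) := by omega
    linear_combination (-2 * (j + m + 2 * ((j + m) / 2)) - 2) * hd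
  · have hd : j + m = -2 * (-(j + m + 1) / 2) - 1 := by omega
    linear_combination (-2 * (j + m - 2 * (-(j + m + 1) / 2))) * hd

theorem g_mul_inv : g * g⁻¹ = 1 :=
  PowerSeries.mul_inv_cancel g (by simp [constantCoeff_g])

theorem psi_mul_inv_g_add_one :
    psi * (g⁻¹ + 1) = X * (psiEven * (psi ^ 4 * g⁻¹) + psiOdd * (1 + g)) ^ 2 := by
  have hpsi : psi ≠ 0 := fun h => by simpa [h] using constantCoeff_psi
  have hne : (g + g ^ 2) * psi + X * psiOdd ^ 2 + psi ≠ 0 := fun h => by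
    have h0 := congrArg constantCoeff h
    simp [constantCoeff_g, constantCoeff_psi] at h0
    revert h0
    decide
  have hkey := add_sq_mul_eq_mul_sq g_eq psi_eq psiEven_mul_psiOdd hne
  exact mul_inv_add_one_eq g_mul_inv g_eq psi_eq
    (mul_one_add_eq_of_add_sq_mul_eq g_mul_inv psiEven_mul_psiOdd hpsi hkey)

theorem coeff_g_inv_eq_coeff_g_pow_seven {n : ℕ} (hn : n % 16 = 7) :
    coeff n g⁻¹ = coeff n (g ^ 7) := by
  have step (s : (ZMod 2)⟦X⟧) (m k : ℕ) : coeff (2 * k + 1) (s ^ 2 * (g⁻¹ + g ^ (2 * m + 1))) =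
      coeff k (s * psi ^ 4 * (g⁻¹ + g ^ m)) := by
    rw [sq_mul_inv_add_pow g_mul_inv g_eq, coeff_two_mul_add_one_sq_add_X_mul_sq]
  obtain ⟨k, rfl⟩ : ∃ k, n = 2 * (2 * (2 * (2 * k) + 1) + 1) + 1 := ⟨n / 16, by omega⟩
  rw [← CharTwo.add_eq_zero, ← map_add]
  calc coeff _ (g⁻¹ + g ^ 7)
      = coeff _ (1 ^ 2 * (g⁻¹ + g ^ (2 * 3 + 1))) := congrArg _ (by ring)
    _ = coeff _ (1 * psi ^ 4 * (g⁻¹ + g ^ 3)) := step 1 3 _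
    _ = coeff _ ((psi ^ 2) ^ 2 * (g⁻¹ + g ^ (2 * 1 + 1))) := congrArg _ (by ring)
    _ = coeff _ (psi ^ 2 * psi ^ 4 * (g⁻¹ + g ^ 1)) := step _ 1 _
    _ = coeff _ ((psi ^ 3) ^ 2 * (g⁻¹ + g ^ (2 * 0 + 1))) := congrArg _ (by ring)
    _ = coeff _ (psi ^ 3 * psi ^ 4 * (g⁻¹ + g ^ 0)) := step _ 0 _
    _ = coeff (2 * k) (X * (psi ^ 3 * (psiEven * (psi ^ 4 * g⁻¹) + psiOdd * (1 + g))) ^ 2) :=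
      congrArg _ (by linear_combination (psi ^ 3) ^ 2 * psi_mul_inv_g_add_one)
    _ = 0 := coeff_two_mul_X_mul_sq _ _

theorem coeff_g_pow_seven (n : ℕ) :
    coeff n (g ^ 7) =
      (Nat.card {t : ℕ × ℕ × ℕ // n = t.1 ^ 2 + 2 * t.2.1 ^ 2 + 4 * t.2.2 ^ 2} : ZMod 2) := by
  have h₁ := finite_fiber_of_injective sq_injective
  have h₂ : ∀ m, Finite {b : ℕ // 2 * b ^ 2 = m} :=
    finite_fiber_of_injective (two_mul_injective.comp sq_injective)
  have h₄ : ∀ m, Finite {c : ℕ // 2 * (2 * c ^ 2) = m} :=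
    finite_fiber_of_injective (two_mul_injective.comp (two_mul_injective.comp sq_injective))
  rw [show g ^ 7 = g * g ^ 2 * (g ^ 2) ^ 2 by ring, g_eq_countSeries, countSeries_sq,
    countSeries_sq, countSeries_mul h₁ h₂, countSeries_mul (finite_fiber_add h₁ h₂) h₄,
    coeff_countSeries]
  exact congrArg _ (Nat.card_congr ((Equiv.prodAssoc ℕ ℕ ℕ).subtypeEquiv fun q => by
    simp only [Equiv.prodAssoc_apply]
    omega))

end ThetaModTwo

theorem stmt12 (n : ℕ) (hn : n % 16 = 7) :
    n ∈ B ↔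
      Odd (Nat.card {t : ℕ × ℕ × ℕ // n = t.1 ^ 2 + 2 * t.2.1 ^ 2 + 4 * t.2.2 ^ 2}) := by
  show coeff n g⁻¹ = 1 ↔ _
  rw [ThetaModTwo.coeff_g_inv_eq_coeff_g_pow_seven hn, ThetaModTwo.coeff_g_pow_seven,
    ZMod.natCast_eq_one_iff_odd]
end
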